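/- arXiv:1404.6574 — 6 statements merged into one kernel-verified Lean document; each statement's English description precedes it below -/
import Mathlib

section
/- Suppose p, r, q are pairwise distinct integers with 1 ≤ p, r, q ≤ K and the word a satisfies a_p = a_r = a_q = ↑. Then (p,q)^a_λ ∘ (r,q)^a_λ = (r,q)^a_λ ∘ (p,r)^a_λ + (r,p)^a_λ ∘ (p,q)^a_λ in End_k(V(a)). -/
open Finset

/-- The set of boxes of the pyramid associated to `lam` (`Box.1` is the column, 0-based). -/
abbrev Box {ℓ : ℕ} (lam : Fin ℓ → ℕ) : Type := (j : Fin ℓ) × Fin (lam j)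

/-- A sequence is unimodular: it weakly increases up to some index `κ` and weakly
decreases afterwards. -/
def Unimodular {ℓ : ℕ} (lam : Fin ℓ → ℕ) : Prop :=
  ∃ κ : Fin ℓ, (∀ i j : Fin ℓ, i ≤ j → j ≤ κ → lam i ≤ lam j) ∧
    (∀ i j : Fin ℓ, κ ≤ i → i ≤ j → lam j ≤ lam i)

/-- The free `k`-module `V(a)` with basis indexed by `K`-tuples of boxes. -/
abbrev V (k : Type*) [CommRing k] {ℓ : ℕ} (lam : Fin ℓ → ℕ) (K : ℕ) : Type _ :=
  (Fin K → Box lam) →₀ k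

/-- The modified transposition `(p,q)^a_λ` (positions are 0-based elements of `Fin K`;
the letter `↑` is `true` and `↓` is `false`). -/
noncomputable def modT (k : Type*) [CommRing k] {ℓ K : ℕ} (lam : Fin ℓ → ℕ)
    (a : Fin K → Bool) (p q : Fin K) : Module.End k (V k lam K) :=
  Finsupp.lift (V k lam K) k (Fin K → Box lam) (fun j =>
    if a q then
      if q < p then
        (if (j p).1 ≤ (j q).1 then Finsupp.single (j ∘ Equiv.swap p q) (1 : k) else 0)
      else
        (if (j q).1 < (j p).1 then -Finsupp.single (j ∘ Equiv.swap p q) (1 : k) else 0)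
    else
      if q < p then
        (if j p = j q then
          -∑ c ∈ univ.filter (fun c : Box lam => (j p).1 ≤ c.1),
            Finsupp.single (Function.update (Function.update j p c) q c) (1 : k)
        else 0)
      else
        (if j p = j q then
          ∑ c ∈ univ.filter (fun c : Box lam => c.1 < (j p).1),
            Finsupp.single (Function.update (Function.update j p c) q c) (1 : k)
        else 0))

/-!
With `a_q = ↑`, the modified transposition `(p,q)^a_λ` sends `v_j` to `ε • v_{j∘(p q)}` with
`ε = [col j_p ≤ col j_q] - [p ≤ q]`. Since `(r q)(p q) = (p r)(r q) = (p q)(r p)` for distinct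
`p, r, q`, all three composites send `v_j` to multiples of the same basis vector, and the relation
becomes an identity between products of these coefficients. It splits into a part in the columns
and a part in the positions, each an instance of the identity
`[x ≤ y][y ≤ z] + [x ≤ z] = [x ≤ y][x ≤ z] + [y ≤ z][x ≤ z]`, valid in any linear order.
-/

open Equiv

section LeInd

variable {α : Type*} [LinearOrder α]

def leInd (x y : α) : ℤ :=
  if x ≤ y then 1 else 0

theorem leInd_add_leInd_of_ne {x y : α} (h : x ≠ y) : leInd x y + leInd y x = 1 := by
  unfold leInd
  split_ifs <;> first | rfl | (exfalso; order)

theorem leInd_mul_leInd_add_leInd (x y z : α) :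
    leInd x y * leInd y z + leInd x z = leInd x y * leInd x z + leInd y z * leInd x z := by
  unfold leInd
  split_ifs <;> first | rfl | (exfalso; order)

end LeInd

section UpSign

variable {ι α : Type*} [LinearOrder ι] [LinearOrder α]

def upSign (p q : ι) (x y : α) : ℤ :=
  leInd x y - leInd p q

theorem upSign_comm_relation {p r q : ι} (hpr : p ≠ r) (hrq : r ≠ q) (x y z : α) :
    upSign r q z y * upSign p q x z =
      upSign p r x z * upSign r q x y + upSign p q x y * upSign r p z y := by
  have hcol := leInd_mul_leInd_add_leInd x z y
  have hpos := leInd_mul_leInd_add_leInd p q r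
  have hpr' := leInd_add_leInd_of_ne hpr
  have hrq' := leInd_add_leInd_of_ne hrq
  unfold upSign
  linear_combination
    hcol - hpos + (leInd p q - leInd p r) * hrq' + (leInd x y - leInd p q) * hpr'

end UpSign

theorem modT_single_of_up {k : Type*} [CommRing k] {ℓ K : ℕ} {lam : Fin ℓ → ℕ}
    {a : Fin K → Bool} (p : Fin K) {q : Fin K} (hq : a q = true) (j : Fin K → Box lam) (c : k) :
    modT k lam a p q (Finsupp.single j c) =
      upSign p q (j p).1 (j q).1 • Finsupp.single (j ∘ swap p q) c := by
  simp only [modT, hq, Finsupp.lift_apply, Finsupp.sum_single_index, zero_smul, if_true, upSign,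
    leInd]
  split_ifs <;> first | (exfalso; order) | simp [Finsupp.smul_single]

theorem modT_comm_relation_upup_general
    (k : Type*) [CommRing k] {ℓ K : ℕ}
    (lam : Fin ℓ → ℕ)
    (a : Fin K → Bool) (p r q : Fin K)
    (hpr : p ≠ r) (hpq : p ≠ q) (hrq : r ≠ q)
    (hp : a p = true) (hr : a r = true) (hq : a q = true) :
    (modT k lam a p q) ∘ₗ (modT k lam a r q) =
      (modT k lam a r q) ∘ₗ (modT k lam a p r) +
        (modT k lam a r p) ∘ₗ (modT k lam a p q) := by
  have hσ₁ : swap r q * swap p q = swap p r * swap r q := by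
    rw [mul_swap_eq_swap_mul, swap_apply_of_ne_of_ne hpr hpq, swap_apply_right]
  have hσ₂ : swap r q * swap p q = swap p q * swap r p := by
    rw [swap_mul_eq_mul_swap, swap_inv, swap_apply_of_ne_of_ne hpr.symm hrq, swap_apply_right]
  refine Finsupp.lhom_ext fun j c => ?_
  simp only [LinearMap.comp_apply, LinearMap.add_apply, modT_single_of_up _ hq,
    modT_single_of_up _ hr, modT_single_of_up _ hp, map_zsmul, smul_smul, Function.comp_apply,
    swap_apply_left, swap_apply_right, swap_apply_of_ne_of_ne hpr hpq,
    swap_apply_of_ne_of_ne hpq.symm hrq.symm, swap_apply_of_ne_of_ne hpr.symm hrq]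
  simp only [Function.comp_assoc, ← Perm.coe_mul, ← hσ₁, ← hσ₂, ← add_smul]
  rw [upSign_comm_relation hpr hrq (j p).1 (j q).1 (j r).1]

/-- Lemma 4.2(ii): `(p,q)∘(r,q) = (r,q)∘(p,r) + (r,p)∘(p,q)` when `a_p = a_r = a_q = ↑`. -/
theorem modT_comm_relation_upup
    (k : Type*) [CommRing k] {ℓ K : ℕ} (hℓ : 1 ≤ ℓ)
    (lam : Fin ℓ → ℕ) (hpos : ∀ j, 0 < lam j) (huni : Unimodular lam)
    (m : Fin ℓ → k)
    (a : Fin K → Bool) (p r q : Fin K)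
    (hpr : p ≠ r) (hpq : p ≠ q) (hrq : r ≠ q)
    (hp : a p = true) (hr : a r = true) (hq : a q = true) :
    (modT k lam a p q) ∘ₗ (modT k lam a r q) =
      (modT k lam a r q) ∘ₗ (modT k lam a p r) +
        (modT k lam a r p) ∘ₗ (modT k lam a p q) :=
  modT_comm_relation_upup_general k lam a p r q hpr hpq hrq hp hr hq
end

section
/- Suppose p, r, q_1, q_2 are pairwise distinct integers with 1 ≤ p, r, q_1, q_2 ≤ K and the word a satisfies a_p = a_r = ↑ (the letters a_{q_1}, a_{q_2} are arbitrary). Then (p,q_1)^a_λ ∘ (r,q_2)^a_λ = (r,q_2)^a_λ ∘ (p,q_1)^a_λ in End_k(V(a)). -/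
open Finset

/-!
Every modified transposition `(p,q)` reads and rewrites only the entries at positions `p` and `q`
of a basis tuple: it is `pairOp p q φ` for a kernel `φ (x, y) (b, c)`, the coefficient with which
the entries `x, y` at `p, q` are replaced by `b, c`. Two such operators on disjoint pairs of
positions commute, because the updates they perform commute and their coefficients multiply in
a commutative ring.
-/

namespace Function

theorem update_update_update_update_comm {α β : Type*} [DecidableEq α] (j : α → β)
    {p q r s : α} (hpr : p ≠ r) (hps : p ≠ s) (hqr : q ≠ r) (hqs : q ≠ s) (b c d e : β) :
    update (update (update (update j r d) s e) p b) q c =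
      update (update (update (update j p b) q c) r d) s e := by
  funext x
  simp only [update]
  split_ifs <;> subst_vars <;> simp_all

theorem comp_swap_eq_update_update {α β : Type*} [DecidableEq α] (j : α → β) (p q : α) :
    j ∘ Equiv.swap p q = update (update j p (j q)) q (j p) := by
  funext x
  simp only [comp_apply, update_apply, Equiv.swap_apply_def]
  split_ifs <;> simp_all

end Function

section PairOp

open Function

variable {k ι β : Type*} [CommSemiring k] [DecidableEq ι] [Fintype β]

noncomputable def pairOp (p q : ι) (φ : β × β → β × β → k) : Module.End k ((ι → β) →₀ k) :=
  Finsupp.lift _ k _ fun j =>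
    ∑ bc, φ (j p, j q) bc • Finsupp.single (update (update j p bc.1) q bc.2) 1

theorem pairOp_single (p q : ι) (φ : β × β → β × β → k) (j : ι → β) :
    pairOp p q φ (Finsupp.single j 1) =
      ∑ bc, φ (j p, j q) bc • Finsupp.single (update (update j p bc.1) q bc.2) 1 := by
  simp [pairOp]

theorem pairOp_comp_comm {p q r s : ι} (hpr : p ≠ r) (hps : p ≠ s) (hqr : q ≠ r) (hqs : q ≠ s)
    (φ ψ : β × β → β × β → k) :
    pairOp p q φ ∘ₗ pairOp r s ψ = pairOp r s ψ ∘ₗ pairOp p q φ := by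
  ext j : 2
  simp only [LinearMap.comp_apply, Finsupp.lsingle_apply, pairOp_single, map_sum, map_smul,
    Finset.smul_sum, smul_smul, update_of_ne hpr, update_of_ne hps, update_of_ne hqr,
    update_of_ne hqs, update_of_ne hpr.symm, update_of_ne hps.symm, update_of_ne hqr.symm,
    update_of_ne hqs.symm]
  rw [Finset.sum_comm]
  refine Finset.sum_congr rfl fun bc _ => Finset.sum_congr rfl fun de _ => ?_
  rw [mul_comm, update_update_update_update_comm j hpr hps hqr hqs]

variable [DecidableEq β]

def swapKernel (w : β → β → k) (x y : β × β) : k :=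
  if y = x.swap then w x.1 x.2 else 0

def diagKernel (w : β → β → k) (x y : β × β) : k :=
  if x.1 = x.2 ∧ y.1 = y.2 then w x.1 y.1 else 0

theorem pairOp_swapKernel_single (w : β → β → k) (p q : ι) (j : ι → β) :
    pairOp p q (swapKernel w) (Finsupp.single j 1) =
      w (j p) (j q) • Finsupp.single (j ∘ Equiv.swap p q) 1 := by
  simp [pairOp_single, swapKernel, ite_smul, comp_swap_eq_update_update j p q]

theorem pairOp_diagKernel_single (w : β → β → k) (p q : ι) (j : ι → β) :
    pairOp p q (diagKernel w) (Finsupp.single j 1) =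
      if j p = j q then ∑ c, w (j p) c • Finsupp.single (update (update j p c) q c) 1 else 0 := by
  simp only [pairOp_single, diagKernel, ite_smul, zero_smul]
  split_ifs with h
  · rw [← Finset.univ_product_univ, Finset.sum_product]
    simp only [h, true_and, Finset.sum_ite_eq, Finset.mem_univ, if_true]
  · simp [h]

end PairOp

section ModT

variable (k : Type*) [CommRing k] {ℓ K : ℕ} (lam : Fin ℓ → ℕ)

noncomputable def modTKernel (a : Fin K → Bool) (p q : Fin K) :
    Box lam × Box lam → Box lam × Box lam → k :=
  if a q then
    swapKernel fun x y =>
      if q < p then (if x.1 ≤ y.1 then 1 else 0) else (if y.1 < x.1 then -1 else 0)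
  else
    diagKernel fun x c =>
      if q < p then (if x.1 ≤ c.1 then -1 else 0) else (if c.1 < x.1 then 1 else 0)

theorem modT_eq_pairOp (a : Fin K → Bool) (p q : Fin K) :
    modT k lam a p q = pairOp p q (modTKernel k lam a p q) := by
  ext j : 2
  by_cases haq : a q <;> by_cases hqp : q < p <;>
    simp [modT, modTKernel, haq, hqp, pairOp_swapKernel_single, pairOp_diagKernel_single,
      ite_smul, Finset.sum_filter, ← Finset.sum_neg_distrib, neg_ite]

end ModT

theorem modT_commute_general
    (k : Type*) [CommRing k] {ℓ K : ℕ}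
    (lam : Fin ℓ → ℕ)
    (a : Fin K → Bool) (p r q₁ q₂ : Fin K)
    (hpr : p ≠ r) (hpq₂ : p ≠ q₂)
    (hrq₁ : r ≠ q₁) (hq : q₁ ≠ q₂) :
    (modT k lam a p q₁) ∘ₗ (modT k lam a r q₂) =
      (modT k lam a r q₂) ∘ₗ (modT k lam a p q₁) := by
  simp only [modT_eq_pairOp]
  exact pairOp_comp_comm hpr hpq₂ hrq₁.symm hq _ _

/-- Lemma 4.2(iv): `(p,q₁)` and `(r,q₂)` commute when `p, r, q₁, q₂` are pairwise
distinct and `a_p = a_r = ↑`. -/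
theorem modT_commute
    (k : Type*) [CommRing k] {ℓ K : ℕ} (hℓ : 1 ≤ ℓ)
    (lam : Fin ℓ → ℕ) (hpos : ∀ j, 0 < lam j) (huni : Unimodular lam)
    (m : Fin ℓ → k)
    (a : Fin K → Bool) (p r q₁ q₂ : Fin K)
    (hpr : p ≠ r) (hpq₁ : p ≠ q₁) (hpq₂ : p ≠ q₂)
    (hrq₁ : r ≠ q₁) (hrq₂ : r ≠ q₂) (hq : q₁ ≠ q₂)
    (hp : a p = true) (hr : a r = true) :
    (modT k lam a p q₁) ∘ₗ (modT k lam a r q₂) =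
      (modT k lam a r q₂) ∘ₗ (modT k lam a p q₁) :=
  modT_commute_general k lam a p r q₁ q₂ hpr hpq₂ hrq₁ hq
end

section
/- Let a and b be words in {↑,↓} of lengths k and l, set K = k + l, and let C : V(ab) → V(a↑↓b) be the k-linear map given on basis vectors by C(v_i) = ∑_{c∈B} v_{i⟨c⟩}, where i⟨c⟩ ∈ B^{K+2} agrees with i in the first k positions, has entry c in positions k+1 and k+2, and agrees with the last l entries of i in positions k+3,…,K+2. Let p be a positive integer such that the p-th letter of the word a↓↓b is ↑. Then: (i) C ∘ (p,q)^{ab}_λ = (p,q)^{a↑↓b}_λ ∘ C whenever q ≠ p and p, q ≤ k; (ii) C ∘ (p,q−2)^{ab}_λ = (p,q)^{a↑↓b}_λ ∘ C whenever p ≤ k and k+2 < q ≤ K+2; (iii) C ∘ (p−2,q)^{ab}_λ = (p,q)^{a↑↓b}_λ ∘ C whenever p > k+2 and q ≤ k; (iv) C ∘ (p−2,q−2)^{ab}_λ = (p,q)^{a↑↓b}_λ ∘ C whenever q ≠ p and k+2 < p, q ≤ K+2; (v) (p,k+1)^{a↑↓b}_λ ∘ C + (p,k+2)^{a↑↓b}_λ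 ∘ C = 0. -/
open Finset

/-- The concatenation `ab` of two words. -/
def catW {kk ll : ℕ} (a : Fin kk → Bool) (b : Fin ll → Bool) : Fin (kk + ll) → Bool :=
  fun t => if h : t.val < kk then a ⟨t.val, h⟩ else b ⟨t.val - kk, by have := t.isLt; omega⟩

/-- The word `a x y b` obtained by inserting the two letters `x, y` between `a` and `b`. -/
def insW {kk ll : ℕ} (a : Fin kk → Bool) (x y : Bool) (b : Fin ll → Bool) :
    Fin (kk + ll + 2) → Bool :=
  fun t =>
    if h : t.val < kk then a ⟨t.val, h⟩
    else if h2 : t.val = kk then x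
    else if h3 : t.val = kk + 1 then y
    else b ⟨t.val - (kk + 2), by have := t.isLt; omega⟩

/-- `i⟨c⟩`: insert the box `c` in positions `k+1` and `k+2` of the tuple `i`. -/
def insB {ℓ : ℕ} {lam : Fin ℓ → ℕ} {kk ll : ℕ} (i : Fin (kk + ll) → Box lam) (c : Box lam) :
    Fin (kk + ll + 2) → Box lam :=
  fun t =>
    if h : t.val < kk then i ⟨t.val, by omega⟩
    else if h2 : t.val < kk + 2 then c
    else i ⟨t.val - 2, by have := t.isLt; omega⟩

/-- The map `C : V(ab) → V(a↑↓b)`, `v_i ↦ ∑_{c ∈ B} v_{i⟨c⟩}`. -/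
noncomputable def Cmap (k : Type*) [CommRing k] {ℓ : ℕ} (lam : Fin ℓ → ℕ) (kk ll : ℕ) :
    V k lam (kk + ll) →ₗ[k] V k lam (kk + ll + 2) :=
  Finsupp.lift (V k lam (kk + ll + 2)) k (Fin (kk + ll) → Box lam)
    (fun i => ∑ c : Box lam, Finsupp.single (insB i c) (1 : k))

/-!
`C` puts a common box into the two new middle slots and leaves every other entry in place,
shifted past the slots. A modified transposition at two old positions only swaps or overwrites
old entries and reads the same letters there, so it commutes with `C`: this gives (i)–(iv).

For (v), the `↑`-transposition `(p, k+1)` sends the summand `v_{i⟨c⟩}` of `C v_i` to the vector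
with `c` in position `p` and `i_p` in slot `k+1`, subject to a column condition on `c`. The
`↓`-transposition `(p, k+2)` kills every summand except `c = i_p`, and on that one it produces
the sum of the very same vectors, over the boxes `c` satisfying the same column condition, with
the opposite sign.
-/

open Function

section Positions

variable {ℓ : ℕ} {lam : Fin ℓ → ℕ} {kk ll : ℕ}

/-- The (0-based) position in `a↑↓b` of the `t`-th letter of `ab`. -/
def skipMid (kk ll : ℕ) (t : Fin (kk + ll)) : Fin (kk + ll + 2) :=
  if t.val < kk then ⟨t.val, by omega⟩ else ⟨t.val + 2, by have := t.isLt; omega⟩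

lemma skipMid_val (t : Fin (kk + ll)) :
    (skipMid kk ll t).val = if t.val < kk then t.val else t.val + 2 := by
  unfold skipMid; split_ifs <;> rfl

lemma skipMid_mk {t : ℕ} (ht : t < kk + ll) :
    skipMid kk ll ⟨t, ht⟩ = ⟨if t < kk then t else t + 2, by split_ifs <;> omega⟩ :=
  Fin.ext (skipMid_val _)

lemma skipMid_strictMono : StrictMono (skipMid kk ll) := fun s t h => by
  rw [Fin.lt_def] at h ⊢; simp only [skipMid_val]; split_ifs <;> omega

lemma skipMid_ne_of_mid (t : Fin (kk + ll)) {s : Fin (kk + ll + 2)}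
    (h : kk ≤ s.val) (h' : s.val < kk + 2) : skipMid kk ll t ≠ s := by
  rintro rfl; rw [skipMid_val] at h h'; split_ifs at h h' <;> omega

lemma mem_mid_or_exists_skipMid_eq (s : Fin (kk + ll + 2)) :
    (kk ≤ s.val ∧ s.val < kk + 2) ∨ ∃ t, skipMid kk ll t = s := by
  have := s.isLt
  by_cases hs : s.val < kk
  · exact .inr ⟨⟨s, by omega⟩, Fin.ext (by simp [skipMid_val, hs])⟩
  by_cases hs' : s.val < kk + 2
  · exact .inl ⟨by omega, hs'⟩
  · exact .inr ⟨⟨s - 2, by omega⟩, Fin.ext (by simp only [skipMid_val]; split_ifs <;> omega)⟩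

lemma insB_skipMid (i : Fin (kk + ll) → Box lam) (c : Box lam) (t : Fin (kk + ll)) :
    insB i c (skipMid kk ll t) = i t := by
  have := skipMid_val t
  unfold insB
  split_ifs at this ⊢ <;> first | omega | exact congrArg _ (Fin.ext (by simp only; omega))

lemma insB_of_mid (i : Fin (kk + ll) → Box lam) (c : Box lam) {s : Fin (kk + ll + 2)}
    (h : kk ≤ s.val) (h' : s.val < kk + 2) : insB i c s = c := by
  unfold insB; split_ifs <;> first | omega | rfl

lemma insW_skipMid (a : Fin kk → Bool) (x y : Bool) (b : Fin ll → Bool) (t : Fin (kk + ll)) :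
    insW a x y b (skipMid kk ll t) = catW a b t := by
  have := skipMid_val t
  unfold insW catW
  split_ifs at this ⊢ <;> first | omega | exact congrArg _ (Fin.ext (by simp only; omega))

lemma insW_of_mid (a : Fin kk → Bool) (x : Bool) (b : Fin ll → Bool) {s : Fin (kk + ll + 2)}
    (h : kk ≤ s.val) (h' : s.val < kk + 2) : insW a x x b s = x := by
  unfold insW; split_ifs <;> first | omega | rfl

lemma update_insB (i : Fin (kk + ll) → Box lam) (c d : Box lam) (t : Fin (kk + ll)) :
    update (insB i c) (skipMid kk ll t) d = insB (update i t d) c := by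
  funext s
  obtain ⟨h, h'⟩ | ⟨u, rfl⟩ := mem_mid_or_exists_skipMid_eq s
  · rw [update_of_ne (skipMid_ne_of_mid t h h').symm, insB_of_mid _ _ h h', insB_of_mid _ _ h h']
  · simp only [update_apply, skipMid_strictMono.injective.eq_iff, insB_skipMid]

lemma insB_comp_swap (i : Fin (kk + ll) → Box lam) (c : Box lam) (p q : Fin (kk + ll)) :
    insB i c ∘ Equiv.swap (skipMid kk ll p) (skipMid kk ll q) = insB (i ∘ Equiv.swap p q) c := by
  funext s
  obtain ⟨h, h'⟩ | ⟨u, rfl⟩ := mem_mid_or_exists_skipMid_eq s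
  · rw [comp_apply, Equiv.swap_apply_of_ne_of_ne (skipMid_ne_of_mid p h h').symm
      (skipMid_ne_of_mid q h h').symm,
      insB_of_mid _ _ h h', insB_of_mid _ _ h h']
  · rw [comp_apply, skipMid_strictMono.injective.swap_apply, insB_skipMid, insB_skipMid, comp_apply]

lemma insB_eq_update_update (i : Fin (kk + ll) → Box lam) (c d : Box lam) :
    insB i c = update (update (insB i d) ⟨kk, by omega⟩ c) ⟨kk + 1, by omega⟩ c := by
  funext s
  obtain ⟨h, h'⟩ | ⟨u, rfl⟩ := mem_mid_or_exists_skipMid_eq s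
  · rw [insB_of_mid _ _ h h']
    simp only [update_apply, Fin.ext_iff]; split_ifs <;> first | rfl | omega
  · rw [update_of_ne (skipMid_ne_of_mid u (by simp) (by simp)),
      update_of_ne (skipMid_ne_of_mid u (by simp) (by simp)),
      insB_skipMid, insB_skipMid]

end Positions

lemma Finsupp.lift_single_one {R X M : Type*} [CommSemiring R] [AddCommMonoid M] [Module R M]
    (f : X → M) (x : X) : Finsupp.lift M R X f (Finsupp.single x 1) = f x := by
  rw [← Finsupp.lift_symm_apply, AddEquiv.symm_apply_apply]

lemma Finsupp.lhom_ext_single_one {R X M : Type*} [CommSemiring R] [AddCommMonoid M] [Module R M]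
    {φ ψ : (X →₀ R) →ₗ[R] M} (h : ∀ x, φ (Finsupp.single x 1) = ψ (Finsupp.single x 1)) :
    φ = ψ :=
  (Finsupp.lift M R X).symm.injective (funext h)

lemma update_update_comp_swap {α β : Type*} [DecidableEq α] (i : α → β) {p q q' : α}
    (hpq : p ≠ q) (hpq' : p ≠ q') (hqq' : q ≠ q') (c : β) :
    update (update i q c) q' c ∘ Equiv.swap p q =
      update (update (update (update i q (i p)) q' (i p)) p c) q' c := by
  funext s
  simp only [comp_apply, update_apply, Equiv.swap_apply_def]
  split_ifs <;> simp_all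

section Transpositions

variable {k : Type*} [CommRing k] {ℓ : ℕ} {lam : Fin ℓ → ℕ}

lemma modT_add_modT_sum_update_eq_zero {K : ℕ} (w : Fin K → Bool) {p q q' : Fin K}
    (hq : w q = true) (hq' : w q' = false) (hpq : p ≠ q) (hpq' : p ≠ q') (hqq' : q ≠ q')
    (hside : q < p ↔ q' < p) (i : Fin K → Box lam) :
    modT k lam w p q (∑ c, Finsupp.single (update (update i q c) q' c) 1) +
      modT k lam w p q' (∑ c, Finsupp.single (update (update i q c) q' c) 1) = 0 := by
  simp only [map_sum, modT, Finsupp.lift_single_one, hq, hq', update_self,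
    update_of_ne hpq, update_of_ne hpq', update_of_ne hqq', if_true, Bool.false_eq_true, if_false]
  by_cases hqp : q < p
  · simp only [hqp, hside.mp hqp, if_true, Finset.sum_ite_eq, Finset.mem_univ, ← Finset.sum_filter,
      update_update_comp_swap i hpq hpq' hqq']
    exact add_neg_cancel _
  · simp only [hqp, hside.not.mp hqp, if_false, Finset.sum_ite_eq, Finset.mem_univ, if_true,
      ← Finset.sum_filter, Finset.sum_neg_distrib, update_update_comp_swap i hpq hpq' hqq']
    exact neg_add_cancel _

variable {kk ll : ℕ}

lemma Cmap_single (i : Fin (kk + ll) → Box lam) :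
    Cmap k lam kk ll (Finsupp.single i 1) = ∑ c, Finsupp.single (insB i c) 1 :=
  Finsupp.lift_single_one _ i

theorem Cmap_comp_modT (a : Fin kk → Bool) (x y : Bool) (b : Fin ll → Bool)
    (p q : Fin (kk + ll)) :
    Cmap k lam kk ll ∘ₗ modT k lam (catW a b) p q =
      modT k lam (insW a x y b) (skipMid kk ll p) (skipMid kk ll q) ∘ₗ Cmap k lam kk ll := by
  refine Finsupp.lhom_ext_single_one fun j => ?_
  simp only [LinearMap.comp_apply, Cmap_single, map_sum, modT, Finsupp.lift_single_one,
    insW_skipMid, insB_skipMid, skipMid_strictMono.lt_iff_lt]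
  split_ifs <;> simp only [map_neg, map_sum, map_zero, Cmap_single, insB_comp_swap, update_insB,
    Finset.sum_neg_distrib, Finset.sum_const_zero]
  all_goals rw [Finset.sum_comm]

theorem modT_comp_Cmap_add_modT_comp_Cmap_eq_zero (a : Fin kk → Bool)
    (b : Fin ll → Bool) (t : Fin (kk + ll)) :
    modT k lam (insW a true false b) (skipMid kk ll t) ⟨kk, by omega⟩ ∘ₗ Cmap k lam kk ll +
      modT k lam (insW a true false b) (skipMid kk ll t) ⟨kk + 1, by omega⟩ ∘ₗ
        Cmap k lam kk ll = 0 := by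
  refine Finsupp.lhom_ext_single_one fun j => ?_
  have hC : Cmap k lam kk ll (Finsupp.single j 1) = ∑ c, Finsupp.single
      (update (update (insB j (j t)) ⟨kk, by omega⟩ c) ⟨kk + 1, by omega⟩ c) 1 := by
    rw [Cmap_single]
    exact Finset.sum_congr rfl fun c _ => by rw [← insB_eq_update_update]
  rw [LinearMap.add_apply, LinearMap.comp_apply, LinearMap.comp_apply, hC, LinearMap.zero_apply]
  refine modT_add_modT_sum_update_eq_zero _ (by simp [insW]) (by simp [insW])
    (skipMid_ne_of_mid t (by simp) (by simp)) (skipMid_ne_of_mid t (by simp) (by simp))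
    (by simp [Fin.ext_iff]) ?_ _
  simp only [Fin.lt_def, skipMid_val]
  split_ifs <;> omega

end Transpositions

/-- Lemma 4.3: interaction of `C` with the modified transpositions.  Positions
`p, q` are 1-based as in the paper. -/
theorem Cmap_modT
    (k : Type*) [CommRing k] {ℓ : ℕ}
    (lam : Fin ℓ → ℕ) (kk ll : ℕ)
    (a : Fin kk → Bool) (b : Fin ll → Bool)
    (p : ℕ) (hp1 : 1 ≤ p) (hpK : p ≤ kk + ll + 2)
    (hup : insW a false false b ⟨p - 1, by omega⟩ = true) :
    -- (i)
    (∀ (q : ℕ) (hq1 : 1 ≤ q) (hqk : q ≤ kk) (hpk : p ≤ kk) (hqp : q ≠ p),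
      (Cmap k lam kk ll) ∘ₗ (modT k lam (catW a b) ⟨p - 1, by omega⟩ ⟨q - 1, by omega⟩) =
        (modT k lam (insW a true false b) ⟨p - 1, by omega⟩ ⟨q - 1, by omega⟩) ∘ₗ
          (Cmap k lam kk ll)) ∧
    -- (ii)
    (∀ (q : ℕ) (hpk : p ≤ kk) (hq1 : kk + 2 < q) (hqK : q ≤ kk + ll + 2),
      (Cmap k lam kk ll) ∘ₗ (modT k lam (catW a b) ⟨p - 1, by omega⟩ ⟨q - 2 - 1, by omega⟩) =
        (modT k lam (insW a true false b) ⟨p - 1, by omega⟩ ⟨q - 1, by omega⟩) ∘ₗ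
          (Cmap k lam kk ll)) ∧
    -- (iii)
    (∀ (q : ℕ) (hpk : kk + 2 < p) (hq1 : 1 ≤ q) (hqk : q ≤ kk),
      (Cmap k lam kk ll) ∘ₗ (modT k lam (catW a b) ⟨p - 2 - 1, by omega⟩ ⟨q - 1, by omega⟩) =
        (modT k lam (insW a true false b) ⟨p - 1, by omega⟩ ⟨q - 1, by omega⟩) ∘ₗ
          (Cmap k lam kk ll)) ∧
    -- (iv)
    (∀ (q : ℕ) (hpk : kk + 2 < p) (hq1 : kk + 2 < q) (hqK : q ≤ kk + ll + 2) (hqp : q ≠ p),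
      (Cmap k lam kk ll) ∘ₗ
          (modT k lam (catW a b) ⟨p - 2 - 1, by omega⟩ ⟨q - 2 - 1, by omega⟩) =
        (modT k lam (insW a true false b) ⟨p - 1, by omega⟩ ⟨q - 1, by omega⟩) ∘ₗ
          (Cmap k lam kk ll)) ∧
    -- (v)
    ((modT k lam (insW a true false b) ⟨p - 1, by omega⟩ ⟨kk, by omega⟩) ∘ₗ
        (Cmap k lam kk ll) +
      (modT k lam (insW a true false b) ⟨p - 1, by omega⟩ ⟨kk + 1, by omega⟩) ∘ₗ
        (Cmap k lam kk ll) = 0) := by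
  refine ⟨fun q _ _ _ _ => ?_, fun q _ _ _ => ?_, fun q _ _ _ => ?_, fun q _ _ _ _ => ?_, ?_⟩
  · convert Cmap_comp_modT a true false b ⟨p - 1, by omega⟩ ⟨q - 1, by omega⟩ using 3 <;>
      simp only [skipMid_mk] <;> congr 1 <;> split_ifs <;> omega
  · convert Cmap_comp_modT a true false b ⟨p - 1, by omega⟩ ⟨q - 2 - 1, by omega⟩ using 3 <;>
      simp only [skipMid_mk] <;> congr 1 <;> split_ifs <;> omega
  · convert Cmap_comp_modT a true false b ⟨p - 2 - 1, by omega⟩ ⟨q - 1, by omega⟩ using 3 <;>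
      simp only [skipMid_mk] <;> congr 1 <;> split_ifs <;> omega
  · convert Cmap_comp_modT a true false b ⟨p - 2 - 1, by omega⟩ ⟨q - 2 - 1, by omega⟩ using 3 <;>
      simp only [skipMid_mk] <;> congr 1 <;> split_ifs <;> omega
  · obtain ⟨h, h'⟩ | ⟨t, ht⟩ := mem_mid_or_exists_skipMid_eq (⟨p - 1, by omega⟩ : Fin (kk + ll + 2))
    · exact absurd ((insW_of_mid a false b h h').symm.trans hup) Bool.false_ne_true
    · rw [← ht]
      exact modT_comp_Cmap_add_modT_comp_Cmap_eq_zero a b t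
end

section
/- Suppose p and r are distinct integers with 1 ≤ p, r ≤ K and the word a satisfies a_p = a_r = ↑. Then (r,p)^a_λ ∘ e_p = −e_r ∘ (p,r)^a_λ in End_k(V(a)). -/
open Finset

/-- The map `e` on boxes: move a box one step to the left along its row when possible. -/
def eBox {ℓ : ℕ} (lam : Fin ℓ → ℕ) (b : Box lam) : Option (Box lam) :=
  if h : 0 < b.1.val ∧ b.2.val < lam ⟨b.1.val - 1, by have := b.1.isLt; omega⟩ then
    some ⟨⟨b.1.val - 1, by have := b.1.isLt; omega⟩, ⟨b.2.val, h.2⟩⟩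
  else none

/-- The endomorphism `e_p` of `V(a)` applying `e` in the `p`-th tensor position. -/
noncomputable def eEnd (k : Type*) [CommRing k] {ℓ K : ℕ} (lam : Fin ℓ → ℕ) (p : Fin K) :
    Module.End k (V k lam K) :=
  Finsupp.lift (V k lam K) k (Fin K → Box lam)
    (fun i =>
      match eBox lam (i p) with
      | some c => Finsupp.single (Function.update i p c) (1 : k)
      | none => 0)

/-!
Both sides vanish unless `e` moves the `p`-th box one column to the left. In that case `e_r`
applied after swapping positions `p` and `r` is the same as `e_p` applied before, and since the
column of the `p`-th box drops by exactly one, the condition `col j_r ≤ col j_p - 1` of `(r,p)`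
is the condition `col j_r < col j_p` of `(p,r)` (and symmetrically when `r < p`). These two
cases of the definition of a modified transposition carry opposite signs.
-/

section

variable {k : Type*} [CommRing k] {ℓ K : ℕ} {lam : Fin ℓ → ℕ}

lemma lift_single_one (f : (Fin K → Box lam) → V k lam K) (j : Fin K → Box lam) :
    Finsupp.lift (V k lam K) k (Fin K → Box lam) f (Finsupp.single j 1) = f j := by
  simp [Finsupp.lift_apply, Finsupp.sum_single_index]

lemma modT_single_of_lt {a : Fin K → Bool} {p q : Fin K} (hq : a q = true) (hqp : q < p)
    (j : Fin K → Box lam) :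
    modT k lam a p q (Finsupp.single j 1) =
      if (j p).1 ≤ (j q).1 then Finsupp.single (j ∘ Equiv.swap p q) 1 else 0 := by
  simp only [modT, lift_single_one, hq, if_true, if_pos hqp]

lemma modT_single_of_gt {a : Fin K → Bool} {p q : Fin K} (hq : a q = true) (hpq : p < q)
    (j : Fin K → Box lam) :
    modT k lam a p q (Finsupp.single j 1) =
      if (j q).1 < (j p).1 then -Finsupp.single (j ∘ Equiv.swap p q) 1 else 0 := by
  simp only [modT, lift_single_one, hq, if_true, if_neg (not_lt_of_gt hpq)]

lemma eBox_col_add_one {b c : Box lam} (h : eBox lam b = some c) : c.1.val + 1 = b.1.val := by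
  unfold eBox at h
  split at h
  · cases h; dsimp only; omega
  · cases h

lemma eEnd_single_of_eBox_eq_none {p : Fin K} {i : Fin K → Box lam}
    (h : eBox lam (i p) = none) : eEnd k lam p (Finsupp.single i 1) = 0 := by
  simp only [eEnd, lift_single_one, h]

lemma eEnd_single_of_eBox_eq_some {p : Fin K} {i : Fin K → Box lam} {c : Box lam}
    (h : eBox lam (i p) = some c) :
    eEnd k lam p (Finsupp.single i 1) = Finsupp.single (Function.update i p c) 1 := by
  simp only [eEnd, lift_single_one, h]

end

lemma update_comp_swap {α β : Type*} [DecidableEq α] (f : α → β) {p r : α} (x : β) :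
    Function.update f p x ∘ Equiv.swap r p = Function.update (f ∘ Equiv.swap p r) r x := by
  rw [Function.update_comp_equiv, Equiv.swap_comm, Equiv.symm_swap, Equiv.swap_apply_left]

theorem modT_eEnd_anticomm_general
    (k : Type*) [CommRing k] {ℓ K : ℕ}
    (lam : Fin ℓ → ℕ)
    (a : Fin K → Bool) (p r : Fin K) (hpr : p ≠ r)
    (hp : a p = true) (hr : a r = true) :
    (modT k lam a r p) ∘ₗ (eEnd k lam p) = -((eEnd k lam r) ∘ₗ (modT k lam a p r)) := by
  ext j : 2
  simp only [LinearMap.comp_apply, LinearMap.neg_apply, Finsupp.lsingle_apply]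
  have hswap : (j ∘ Equiv.swap p r) r = j p := by simp
  rcases heb : eBox lam (j p) with _ | c
  · rw [eEnd_single_of_eBox_eq_none heb, map_zero]
    rcases hpr.lt_or_gt with hlt | hlt
    · rw [modT_single_of_gt hr hlt]
      split_ifs <;> simp [eEnd_single_of_eBox_eq_none (hswap ▸ heb)]
    · rw [modT_single_of_lt hr hlt]
      split_ifs <;> simp [eEnd_single_of_eBox_eq_none (hswap ▸ heb)]
  · have hcol := eBox_col_add_one heb
    rw [eEnd_single_of_eBox_eq_some heb]
    rcases hpr.lt_or_gt with hlt | hlt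
    · rw [modT_single_of_gt hr hlt, modT_single_of_lt hp hlt, Function.update_self,
        Function.update_of_ne hpr.symm]
      have hiff : (j r).1 ≤ c.1 ↔ (j r).1 < (j p).1 := by rw [Fin.le_def, Fin.lt_def]; omega
      simp only [hiff]
      split_ifs <;> simp [eEnd_single_of_eBox_eq_some (hswap ▸ heb), update_comp_swap]
    · rw [modT_single_of_lt hr hlt, modT_single_of_gt hp hlt, Function.update_self,
        Function.update_of_ne hpr.symm]
      have hiff : c.1 < (j r).1 ↔ (j p).1 ≤ (j r).1 := by rw [Fin.le_def, Fin.lt_def]; omega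
      simp only [hiff]
      split_ifs <;> simp [eEnd_single_of_eBox_eq_some (hswap ▸ heb), update_comp_swap]

/-- `(r,p)^a_λ ∘ e_p = −(e_r ∘ (p,r)^a_λ)` when `a_p = a_r = ↑`. -/
theorem modT_eEnd_anticomm
    (k : Type*) [CommRing k] {ℓ K : ℕ} (hℓ : 1 ≤ ℓ)
    (lam : Fin ℓ → ℕ) (hpos : ∀ j, 0 < lam j) (huni : Unimodular lam)
    (m : Fin ℓ → k)
    (a : Fin K → Bool) (p r : Fin K) (hpr : p ≠ r)
    (hp : a p = true) (hr : a r = true) :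
    (modT k lam a r p) ∘ₗ (eEnd k lam p) = -((eEnd k lam r) ∘ₗ (modT k lam a p r)) :=
  modT_eEnd_anticomm_general k lam a p r hpr hp hr
end

section
/- Let k be a commutative ring, ℓ ≥ 1, and m_1,…,m_ℓ, λ_1,…,λ_ℓ ∈ k. Then for every K ≥ 1: ∑_{i+j=K, i,j≥0} h_i(m_1,…,m_ℓ) · e_j(λ_1−m_1,…,λ_ℓ−m_ℓ) = ∑_{r=1}^{K} ∑_{1≤p_1<⋯<p_r≤ℓ} h_{K−r}(m_{p_1},…,m_{p_r}) · λ_{p_1}⋯λ_{p_r}. -/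
open Finset

/-- The complete homogeneous symmetric polynomial of degree `d` in the family of
elements `x i`, `i ∈ S`: the sum of all monomials of total degree `d`. -/
noncomputable def hsym {R : Type*} [CommRing R] {ι : Type*} [DecidableEq ι]
    (S : Finset ι) (x : ι → R) (d : ℕ) : R :=
  ∑ t ∈ S.sym d, ((t : Multiset ι).map x).prod

/-- The elementary symmetric polynomial of degree `d` in the family of elements
`x i`, `i ∈ S`: the sum of all products of `d` distinct members. -/
noncomputable def esym {R : Type*} [CommRing R] {ι : Type*} [DecidableEq ι]
    (S : Finset ι) (x : ι → R) (d : ℕ) : R :=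
  ∑ t ∈ S.powersetCard d, ∏ i ∈ t, x i

/-!
With `H_S(X) = ∑_d h_d(m_S) X^d`, the series `H_S` is the inverse of `∏_{p ∈ S} (1 - m_p X)`.
Writing `1 + (λ_p - m_p) X = λ_p X + (1 - m_p X)` and expanding the product over `S` gives
`H_S(X) ∏_{p ∈ S} (1 + (λ_p - m_p) X) = ∑_{T ⊆ S} λ^T X^{|T|} H_T(X)`, since multiplying `H_S` by
the factors `1 - m_p X` with `p ∉ T` leaves `H_T`. The left side of the theorem is the coefficient of
`X^K` on the left, the right side that on the right; the term `T = ∅` drops out because `K ≥ 1`.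
-/

open PowerSeries

lemma sum_range_sum_powersetCard {ι M : Type*} [AddCommMonoid M] (S : Finset ι)
    (g : ℕ → Finset ι → M) (K : ℕ) :
    ∑ r ∈ range (K + 1), ∑ T ∈ S.powersetCard r, g r T =
      ∑ T ∈ S.powerset, if #T ≤ K then g #T T else 0 := by
  calc ∑ r ∈ range (K + 1), ∑ T ∈ S.powersetCard r, g r T
      = ∑ r ∈ range (K + 1), ∑ T ∈ S.powersetCard r, g #T T :=
        sum_congr rfl fun r _ => sum_congr rfl fun T hT => by rw [(mem_powersetCard.1 hT).2]
    _ = _ := by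
      simp_rw [powersetCard_eq_filter, sum_fiberwise_eq_sum_filter, sum_filter, mem_range,
        Nat.lt_succ_iff]

section hsym

variable {R : Type*} [CommRing R] {ι : Type*} [DecidableEq ι]

lemma hsym_zero (S : Finset ι) (x : ι → R) : hsym S x 0 = 1 := by
  simp only [hsym, sym_zero, sum_singleton]
  rfl

lemma hsym_empty_succ (x : ι → R) (n : ℕ) : hsym ∅ x (n + 1) = 0 := by
  simp [hsym]

lemma sym_insert_succ (a : ι) (S : Finset ι) (n : ℕ) :
    (insert a S).sym (n + 1) = S.sym (n + 1) ∪ ((insert a S).sym n).image (Sym.cons a) := by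
  ext t
  simp only [mem_union, mem_image, mem_sym_iff]
  constructor
  · intro h
    by_cases hat : a ∈ t
    · refine Or.inr ⟨t.erase a hat, fun b hb => h b ?_, Sym.cons_erase hat⟩
      exact Multiset.mem_of_mem_erase (s := (t : Multiset ι)) hb
    · exact Or.inl fun b hb =>
        (mem_insert.mp (h b hb)).resolve_left fun hba => hat (hba ▸ hb)
  · rintro (h | ⟨t', ht', rfl⟩) b hb
    · exact mem_insert_of_mem (h b hb)
    · rcases Sym.mem_cons.mp hb with rfl | hb
      exacts [mem_insert_self _ _, ht' b hb]

lemma hsym_insert_succ {a : ι} {S : Finset ι} (ha : a ∉ S) (x : ι → R) (n : ℕ) :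
    hsym (insert a S) x (n + 1) = hsym S x (n + 1) + x a * hsym (insert a S) x n := by
  have hdisj : Disjoint (S.sym (n + 1)) (((insert a S).sym n).image (Sym.cons a)) := by
    simp only [disjoint_left, mem_image, not_exists, not_and]
    rintro _ ht t' _ rfl
    exact ha (mem_sym_iff.mp ht a (Sym.mem_cons_self a t'))
  rw [hsym, sym_insert_succ, sum_union hdisj, sum_image fun _ _ _ _ => (Sym.cons_inj_right a _ _).mp,
    hsym, hsym, mul_sum]
  simp [Sym.coe_cons]

noncomputable def hsymSeries (S : Finset ι) (x : ι → R) : R⟦X⟧ :=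
  PowerSeries.mk (hsym S x)

@[simp]
lemma coeff_hsymSeries (S : Finset ι) (x : ι → R) (n : ℕ) :
    coeff n (hsymSeries S x) = hsym S x n :=
  coeff_mk _ _

lemma hsymSeries_empty (x : ι → R) : hsymSeries ∅ x = 1 := by
  ext (_ | n) <;> simp [hsym_zero, hsym_empty_succ]

lemma one_sub_C_mul_X_mul_hsymSeries_insert {a : ι} {S : Finset ι} (ha : a ∉ S) (x : ι → R) :
    (1 - C (x a) * X) * hsymSeries (insert a S) x = hsymSeries S x := by
  ext (_ | n) <;> rw [sub_mul, one_mul, mul_assoc, map_sub, coeff_C_mul]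
  · simp [hsym_zero]
  · rw [coeff_succ_X_mul, coeff_hsymSeries, coeff_hsymSeries, coeff_hsymSeries,
      hsym_insert_succ ha]
    ring

lemma prod_one_sub_C_mul_X_mul_hsymSeries (S : Finset ι) (x : ι → R) :
    (∏ p ∈ S, (1 - C (x p) * X)) * hsymSeries S x = 1 := by
  induction S using Finset.induction with
  | empty => rw [prod_empty, one_mul, hsymSeries_empty]
  | insert a S ha ih =>
    rw [prod_insert ha, mul_comm (1 - _), mul_assoc, one_sub_C_mul_X_mul_hsymSeries_insert ha, ih]

lemma hsymSeries_mul_prod_sdiff {S T : Finset ι} (hT : T ⊆ S) (x : ι → R) :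
    hsymSeries S x * ∏ p ∈ S \ T, (1 - C (x p) * X) = hsymSeries T x := by
  -- `hsymSeries` inverts `∏ (1 - C (x p) * X)`, and the product over `S` splits along `T`.
  have hS := prod_one_sub_C_mul_X_mul_hsymSeries S x
  have hT' := prod_one_sub_C_mul_X_mul_hsymSeries T x
  have hsplit := prod_sdiff (f := fun p => 1 - C (x p) * X) hT
  linear_combination (-(hsymSeries S x * ∏ p ∈ S \ T, (1 - C (x p) * X))) * hT' +
    (hsymSeries T x * hsymSeries S x) * hsplit + hsymSeries T x * hS

lemma coeff_prod_one_add_C_mul_X (S : Finset ι) (y : ι → R) (n : ℕ) :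
    coeff n (∏ p ∈ S, (1 + C (y p) * X)) = esym S y n := by
  simp_rw [prod_one_add, prod_mul_distrib, prod_const, ← map_prod, map_sum, coeff_C_mul,
    coeff_X_pow, mul_ite, mul_one, mul_zero, esym, powersetCard_eq_filter, sum_filter,
    @eq_comm _ n]

lemma hsymSeries_mul_prod_one_add_sub (S : Finset ι) (m lam : ι → R) :
    hsymSeries S m * ∏ p ∈ S, (1 + C (lam p - m p) * X) =
      ∑ T ∈ S.powerset, C (∏ p ∈ T, lam p) * X ^ #T * hsymSeries T m := by
  have hsplit : ∀ p ∈ S, 1 + C (lam p - m p) * X = C (lam p) * X + (1 - C (m p) * X) :=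
    fun p _ => by rw [map_sub]; ring
  rw [prod_congr rfl hsplit, prod_add, mul_sum]
  refine sum_congr rfl fun T hT => ?_
  rw [mul_left_comm, hsymSeries_mul_prod_sdiff (mem_powerset.mp hT), prod_mul_distrib, prod_const,
    map_prod]

theorem sum_antidiagonal_hsym_mul_esym_sub (S : Finset ι) (m lam : ι → R) (K : ℕ) :
    ∑ ij ∈ antidiagonal K, hsym S m ij.1 * esym S (fun p => lam p - m p) ij.2 =
      ∑ r ∈ range (K + 1), ∑ T ∈ S.powersetCard r, hsym T m (K - r) * ∏ p ∈ T, lam p := by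
  have hcoeff := congrArg (coeff K) (hsymSeries_mul_prod_one_add_sub S m lam)
  rw [coeff_mul] at hcoeff
  simp_rw [coeff_hsymSeries, coeff_prod_one_add_C_mul_X] at hcoeff
  rw [hcoeff, map_sum, sum_range_sum_powersetCard]
  refine sum_congr rfl fun T _ => ?_
  rw [mul_assoc, coeff_C_mul, coeff_X_pow_mul', coeff_hsymSeries]
  split_ifs <;> simp [mul_comm]

end hsym

theorem delta_eq_chain_sum_general
    (k : Type*) [CommRing k] (ℓ : ℕ)
    (m : Fin ℓ → k) (lam : Fin ℓ → k) (K : ℕ) (hK : 1 ≤ K) :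
    ∑ ij ∈ Finset.HasAntidiagonal.antidiagonal K,
        hsym Finset.univ m ij.1 * esym Finset.univ (fun p => lam p - m p) ij.2 =
      ∑ r ∈ Finset.Icc 1 K, ∑ S ∈ (Finset.univ : Finset (Fin ℓ)).powersetCard r,
        hsym S m (K - r) * ∏ p ∈ S, lam p := by
  obtain ⟨K, rfl⟩ := Nat.exists_eq_add_of_le' hK
  rw [sum_antidiagonal_hsym_mul_esym_sub, sum_range_eq_add_Ico _ (by omega),
    Ico_add_one_right_eq_Icc]
  simp [hsym_empty_succ]

/-- `∑_{i+j=K} h_i(m) e_j(λ−m) = ∑_{r=1}^{K} ∑_{1≤p_1<⋯<p_r≤ℓ} h_{K−r}(m_{p_1},…,m_{p_r}) λ_{p_1}⋯λ_{p_r}`. -/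
theorem delta_eq_chain_sum
    (k : Type*) [CommRing k] (ℓ : ℕ) (hℓ : 1 ≤ ℓ)
    (m : Fin ℓ → k) (lam : Fin ℓ → k) (K : ℕ) (hK : 1 ≤ K) :
    ∑ ij ∈ Finset.HasAntidiagonal.antidiagonal K,
        hsym Finset.univ m ij.1 * esym Finset.univ (fun p => lam p - m p) ij.2 =
      ∑ r ∈ Finset.Icc 1 K, ∑ S ∈ (Finset.univ : Finset (Fin ℓ)).powersetCard r,
        hsym S m (K - r) * ∏ p ∈ S, lam p :=
  delta_eq_chain_sum_general k ℓ m lam K hK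
end

section
/- Let R be a commutative ring, ℓ ≥ 1, and λ_1,…,λ_ℓ ∈ R. Then the determinant of the ℓ×ℓ matrix whose (i,j)-entry is e_{i−1}(λ_1,…,λ_{j−1},λ_{j+1},…,λ_ℓ), i.e. the (i−1)-st elementary symmetric polynomial of the ℓ−1 elements obtained by omitting λ_j, equals ∏_{1≤i<j≤ℓ}(λ_i − λ_j). -/
open Finset

/-!
Subtract the first column from every other one. The first row consists of `e₀ = 1`, so it becomes
`(1, 0, …, 0)`, and because `e_{d+1}(S ∪ {a}) - e_{d+1}(S ∪ {b}) = (λ_a - λ_b) e_d(S)`, the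
remaining minor is the same matrix for `λ₂, …, λ_ℓ` with its `j`-th column scaled by `λ₁ - λ_j`.
Induction on `ℓ` then gives the product.
-/

open Matrix

theorem Multiset.esymm_cons_succ {R : Type*} [CommRing R] (a : R) (s : Multiset R) (d : ℕ) :
    (a ::ₘ s).esymm (d + 1) = s.esymm (d + 1) + a * s.esymm d := by
  simp [Multiset.esymm, Multiset.powersetCard_cons, Multiset.sum_map_mul_left]

theorem Fin.univ_erase_succ (n : ℕ) (j : Fin n) :
    (univ : Finset (Fin (n + 1))).erase j.succ = insert 0 ((univ.erase j).map (Fin.succEmb n)) := by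
  ext k; cases k using Fin.cases <;> simp [eq_comm]

theorem Fin.univ_erase_zero (n : ℕ) (j : Fin n) :
    (univ : Finset (Fin (n + 1))).erase 0 = insert j.succ ((univ.erase j).map (Fin.succEmb n)) := by
  ext k; cases k using Fin.cases <;> simp

section esym

variable {R : Type*} [CommRing R] {ι : Type*} [DecidableEq ι]

theorem esym_eq_esymm (S : Finset ι) (x : ι → R) (d : ℕ) :
    esym S x d = (S.val.map x).esymm d := by
  rw [esym, Finset.esymm_map_val]

@[simp]
theorem esym_zero (S : Finset ι) (x : ι → R) : esym S x 0 = 1 := by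
  simp [esym]

theorem esym_insert_succ {a : ι} {S : Finset ι} (ha : a ∉ S) (x : ι → R) (d : ℕ) :
    esym (insert a S) x (d + 1) = esym S x (d + 1) + x a * esym S x d := by
  simp only [esym_eq_esymm, insert_val_of_notMem ha, Multiset.map_cons, Multiset.esymm_cons_succ]

theorem esym_insert_sub_esym_insert {a b : ι} {S : Finset ι} (ha : a ∉ S) (hb : b ∉ S)
    (x : ι → R) (d : ℕ) :
    esym (insert a S) x (d + 1) - esym (insert b S) x (d + 1) = (x a - x b) * esym S x d := by
  rw [esym_insert_succ ha, esym_insert_succ hb]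
  ring

theorem esym_map {κ : Type*} [DecidableEq κ] (f : κ ↪ ι) (S : Finset κ) (x : ι → R) (d : ℕ) :
    esym (S.map f) x d = esym S (x ∘ f) d := by
  simp only [esym_eq_esymm, Finset.map_val, Multiset.map_map]

end esym

section esymOmitMatrix

variable {R : Type*} [CommRing R]

noncomputable def esymOmitMatrix {n : ℕ} (x : Fin n → R) : Matrix (Fin n) (Fin n) R :=
  of fun i j => esym (univ.erase j) x i

theorem esym_erase_succ_sub_esym_erase_zero {n : ℕ} (x : Fin (n + 1) → R) (j : Fin n) (d : ℕ) :
    esym (univ.erase j.succ) x (d + 1) - esym (univ.erase 0) x (d + 1) =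
      (x 0 - x j.succ) * esym (univ.erase j) (x ∘ Fin.succ) d := by
  rw [Fin.univ_erase_succ, Fin.univ_erase_zero n j, esym_insert_sub_esym_insert, esym_map]
  · rfl
  all_goals simp

theorem det_esymOmitMatrix_succ {n : ℕ} (x : Fin (n + 1) → R) :
    (esymOmitMatrix x).det =
      (∏ j : Fin n, (x 0 - x j.succ)) * (esymOmitMatrix (x ∘ Fin.succ)).det := by
  set A := esymOmitMatrix x
  let B : Matrix (Fin (n + 1)) (Fin (n + 1)) R :=
    of fun i j => if j = 0 then A i 0 else A i j - A i 0
  have hcol : A.det = B.det := by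
    rw [← det_transpose, ← det_transpose B]
    refine det_eq_of_forall_row_eq_smul_add_const (fun j => if j = 0 then 0 else 1) 0 (by simp)
      fun j i => ?_
    by_cases hj : j = 0 <;> simp [B, hj]
  have hrow : B.det = (B.submatrix Fin.succ Fin.succ).det := by
    rw [det_succ_row_zero, Fin.sum_univ_succ]
    simp [B, A, esymOmitMatrix]
  have hsub : B.submatrix Fin.succ Fin.succ =
      of fun i j => (x 0 - x j.succ) * esymOmitMatrix (x ∘ Fin.succ) i j := by
    ext i j
    simp [B, A, esymOmitMatrix, esym_erase_succ_sub_esym_erase_zero]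
  rw [hcol, hrow, hsub, det_mul_row]

theorem det_esymOmitMatrix {n : ℕ} (x : Fin n → R) :
    (esymOmitMatrix x).det = ∏ i, ∏ j ∈ Ioi i, (x i - x j) := by
  induction n with
  | zero => simp
  | succ n ih =>
    rw [det_esymOmitMatrix_succ, ih, Fin.prod_univ_succ, Fin.prod_Ioi_zero]
    simp [Fin.prod_Ioi_succ]

end esymOmitMatrix

theorem det_esym_omit_eq_vandermonde_general
    (R : Type*) [CommRing R] (ℓ : ℕ) (lam : Fin ℓ → R) :
    (Matrix.of fun i j : Fin ℓ =>
        esym (Finset.univ.erase j) lam i.val).det =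
      ∏ i : Fin ℓ, ∏ j ∈ Finset.Ioi i, (lam i - lam j) :=
  det_esymOmitMatrix lam

/-- The Vandermonde-type determinant: `det (e_{i−1}(λ_1,…,λ̂_j,…,λ_ℓ))_{i,j} = ∏_{i<j} (λ_i − λ_j)`
(rows and columns indexed by `Fin ℓ`, so the `(i,j)` entry has degree `i` in 0-based indexing). -/
theorem det_esym_omit_eq_vandermonde
    (R : Type*) [CommRing R] (ℓ : ℕ) (hℓ : 1 ≤ ℓ) (lam : Fin ℓ → R) :
    (Matrix.of fun i j : Fin ℓ =>
        esym (Finset.univ.erase j) lam i.val).det =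
      ∏ i : Fin ℓ, ∏ j ∈ Finset.Ioi i, (lam i - lam j) :=
  det_esym_omit_eq_vandermonde_general R ℓ lam
end
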